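/- If 0 ≤ μτ < 1/e, then dexp(-μt; -μτ) → 0 as t → ∞. -/

import Mathlib

open Real Set Filter

noncomputable def dexp (μ τ t : ℝ) : ℝ :=
  ∑' n : ℕ, (-μ) ^ n * (t - n * τ) ^ n / (Nat.factorial n) * (if (n : ℝ) * τ ≤ t then 1 else 0)

/-!
For `τ > 0`, `dexp` agrees on `[0, ∞)` with a continuous function `F` that equals `1` on
`(-∞, τ]`, is locally a finite sum, and satisfies `F' = -μ F(· - τ)` on `(τ, ∞)`. The weighted
function `F(t) e^{t/τ}` solves `f' = f/τ - μe·f(· - τ)`; as `μe < 1/τ`, a first-exit argument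
shows that it is nondecreasing, so `F > 0`. Hence `F` is antitone, `F' ≤ -μF`, and
`0 < F(t) ≤ e^{-μ(t-τ)}`. For `τ = 0`, `dexp` is `exp(-μt)` on `[0, ∞)`.
-/

open Topology

theorem hasDerivAt_max_sub_pow {c x : ℝ} {n : ℕ} (hcx : c < x ∨ n ≠ 0) :
    HasDerivAt (fun y => max (y - c) 0 ^ (n + 1)) ((n + 1) * max (x - c) 0 ^ n) x := by
  have hoff : ∀ y, c < y ∨ n ≠ 0 → y ≠ c →
      HasDerivAt (fun y => max (y - c) 0 ^ (n + 1)) ((n + 1) * max (y - c) 0 ^ n) y := by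
    intro y hy hyc
    rcases hyc.lt_or_gt with hlt | hgt
    · have hn : n ≠ 0 := hy.resolve_left hlt.not_gt
      have hzero : (fun y => max (y - c) 0 ^ (n + 1)) =ᶠ[𝓝 y] fun _ => 0 := by
        filter_upwards [Iio_mem_nhds hlt] with z hz
        simp [max_eq_right (sub_nonpos.2 (mem_Iio.1 hz).le)]
      rw [max_eq_right (by linarith), zero_pow hn, mul_zero]
      exact (hasDerivAt_const y 0).congr_of_eventuallyEq hzero
    · have hpow : (fun y => max (y - c) 0 ^ (n + 1)) =ᶠ[𝓝 y] fun y => (y - c) ^ (n + 1) := by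
        filter_upwards [Ioi_mem_nhds hgt] with z hz
        rw [max_eq_left (sub_nonneg.2 (mem_Ioi.1 hz).le)]
      rw [max_eq_left (by linarith)]
      simpa using (((hasDerivAt_id y).sub_const c).pow (n + 1)).congr_of_eventuallyEq hpow
  rcases eq_or_ne x c with rfl | hxc
  · refine hasDerivAt_of_hasDerivAt_of_ne (fun y hy => hoff y (.inr ?_) hy) (by fun_prop)
      (by fun_prop)
    exact hcx.resolve_left (lt_irrefl x)
  · exact hoff x hcx hxc

theorem monotoneOn_Ici_of_hasDerivAt_delay {f : ℝ → ℝ} {a κ τ : ℝ} (hτ : 0 ≤ τ) (hκ : 0 ≤ κ)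
    (hκa : κ < a) (hf : Continuous f) (hf₀ : 0 < f 0) (hinit : MonotoneOn f (Icc 0 τ))
    (hderiv : ∀ t, τ < t → HasDerivAt f (a * f t - κ * f (t - τ)) t) :
    MonotoneOn f (Ici 0) := by
  set d : ℝ → ℝ := fun t => a * f t - κ * f (t - τ)
  have hmono : ∀ b, (∀ t ∈ Ioo τ b, 0 ≤ d t) → MonotoneOn f (Icc 0 b) := by
    intro b hb
    rcases le_total b τ with hbτ | hτb
    · exact hinit.mono (Icc_subset_Icc_right hbτ)
    rw [← Icc_union_Icc_eq_Icc hτ hτb]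
    refine hinit.union_right ?_ (isGreatest_Icc hτ) (isLeast_Icc hτb)
    refine monotoneOn_of_hasDerivWithinAt_nonneg (convex_Icc τ b) hf.continuousOn
      (fun t ht => (hderiv t ?_).hasDerivWithinAt) (fun t ht => hb t ?_) <;>
      simp_all [interior_Icc]
  -- At the first `t₀ ≥ τ` with `d t₀ ≤ 0`, `f` is still monotone on `[0, t₀]`, which forces
  -- `d t₀ ≥ (a - κ) f t₀ > 0`.
  have hd_pos : ∀ t, τ ≤ t → 0 < d t := by
    by_contra! hbad
    set B := {t | τ ≤ t ∧ d t ≤ 0}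
    have hB : IsClosed B :=
      isClosed_Ici.inter (isClosed_le (f := d) (by fun_prop) continuous_const)
    have hBbdd : BddBelow B := ⟨τ, fun t ht => ht.1⟩
    obtain ⟨hτt₀, hdt₀⟩ : sInf B ∈ B := hB.csInf_mem hbad hBbdd
    set t₀ := sInf B
    have hmono₀ : MonotoneOn f (Icc 0 t₀) := hmono t₀ fun t ht => by
      by_contra! hdt
      exact notMem_of_lt_csInf ht.2 hBbdd ⟨ht.1.le, hdt.le⟩
    have hlag : t₀ - τ ∈ Icc 0 t₀ := ⟨by linarith, by linarith⟩
    have ht₀ : 0 ≤ t₀ := hτ.trans hτt₀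
    have h₁ : f 0 ≤ f (t₀ - τ) := hmono₀ (left_mem_Icc.2 ht₀) hlag hlag.1
    have h₂ : f (t₀ - τ) ≤ f t₀ := hmono₀ hlag (right_mem_Icc.2 ht₀) hlag.2
    have : κ * f (t₀ - τ) ≤ κ * f t₀ := mul_le_mul_of_nonneg_left h₂ hκ
    have : κ * f t₀ < a * f t₀ := mul_lt_mul_of_pos_right hκa (by linarith)
    exact hdt₀.not_gt (by simp only [d]; linarith)
  intro x hx y hy hxy
  exact hmono y (fun t ht => (hd_pos t ht.1.le).le) ⟨hx, hxy⟩ ⟨hy, le_rfl⟩ hxy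

theorem exists_lt_succ_mul {τ : ℝ} (hτ : 0 < τ) (t : ℝ) : ∃ N : ℕ, t < (N + 1) * τ := by
  obtain ⟨N, hN⟩ := exists_nat_gt (t / τ)
  exact ⟨N, by rw [div_lt_iff₀ hτ] at hN; nlinarith⟩

open Finset Nat

/-- The Heaviside cut-off of `dexp` written as a positive part: the series `dexpExt` agrees with
`dexp` for `t ≥ 0`, equals `1` for `t < 0`, and has continuous terms. -/
noncomputable def dexpTerm (μ τ : ℝ) (n : ℕ) (t : ℝ) : ℝ :=
  (-μ) ^ n * max (t - n * τ) 0 ^ n / n !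

noncomputable def dexpExt (μ τ t : ℝ) : ℝ := ∑' n : ℕ, dexpTerm μ τ n t

section

variable {μ τ t : ℝ}

@[simp]
theorem dexpTerm_zero : dexpTerm μ τ 0 t = 1 := by simp [dexpTerm]

theorem dexpTerm_of_le {n : ℕ} (hn : n ≠ 0) (ht : t ≤ n * τ) : dexpTerm μ τ n t = 0 := by
  simp [dexpTerm, max_eq_right (sub_nonpos.2 ht), zero_pow hn]

theorem dexp_eq_dexpExt (ht : 0 ≤ t) : dexp μ τ t = dexpExt μ τ t := by
  refine tsum_congr fun n => ?_
  by_cases hn : (n : ℝ) * τ ≤ t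
  · rw [if_pos hn, mul_one, dexpTerm, max_eq_left (sub_nonneg.2 hn)]
  · rw [if_neg hn, mul_zero, dexpTerm_of_le _ (not_le.1 hn).le]
    rintro rfl
    simp [ht] at hn

theorem dexpExt_eq_sum (hτ : 0 ≤ τ) {N : ℕ} (ht : t ≤ (N + 1) * τ) :
    dexpExt μ τ t = ∑ n ∈ range (N + 1), dexpTerm μ τ n t := by
  refine tsum_eq_sum fun n hn => dexpTerm_of_le (by simp at hn; omega) (ht.trans ?_)
  gcongr
  exact_mod_cast (not_lt.1 (mem_range.not.1 hn))

theorem dexpExt_of_le (hτ : 0 ≤ τ) (ht : t ≤ τ) : dexpExt μ τ t = 1 := by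
  simpa using dexpExt_eq_sum (N := 0) hτ (by simpa using ht)

theorem dexpExt_eventuallyEq_sum (hτ : 0 ≤ τ) {N : ℕ} (ht : t < (N + 1) * τ) :
    dexpExt μ τ =ᶠ[𝓝 t] fun y => ∑ n ∈ range (N + 1), dexpTerm μ τ n y := by
  filter_upwards [Iio_mem_nhds ht] with y hy using dexpExt_eq_sum hτ (mem_Iio.1 hy).le

theorem continuous_dexpExt (hτ : 0 < τ) : Continuous (dexpExt μ τ) := by
  refine continuous_iff_continuousAt.2 fun t => ?_
  obtain ⟨N, hN⟩ := exists_lt_succ_mul hτ t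
  refine ContinuousAt.congr ?_ (dexpExt_eventuallyEq_sum hτ.le hN).symm
  unfold dexpTerm
  fun_prop

theorem hasDerivAt_dexpTerm_succ {m : ℕ} (ht : τ < t) :
    HasDerivAt (dexpTerm μ τ (m + 1)) (-μ * dexpTerm μ τ m (t - τ)) t := by
  have hmax := hasDerivAt_max_sub_pow (c := (m + 1 : ℕ) * τ) (x := t) (n := m)
    (by rcases m with _ | m <;> simp_all)
  have hfun : dexpTerm μ τ (m + 1) =
      fun y => (-μ) ^ (m + 1) / (m + 1 : ℕ)! * max (y - (m + 1 : ℕ) * τ) 0 ^ (m + 1) := by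
    ext y
    rw [dexpTerm, mul_div_right_comm]
  rw [hfun]
  refine (hmax.const_mul _).congr_deriv ?_
  rw [dexpTerm, show t - τ - m * τ = t - (m + 1 : ℕ) * τ by push_cast; ring, factorial_succ]
  push_cast
  field_simp
  ring

theorem hasDerivAt_dexpExt (hτ : 0 < τ) (ht : τ < t) :
    HasDerivAt (dexpExt μ τ) (-μ * dexpExt μ τ (t - τ)) t := by
  obtain ⟨N, hN⟩ := exists_lt_succ_mul hτ (t - τ)
  have hsum : HasDerivAt (fun y => ∑ n ∈ range (N + 1 + 1), dexpTerm μ τ n y)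
      (∑ n ∈ range (N + 1), -μ * dexpTerm μ τ n (t - τ)) t := by
    simp_rw [sum_range_succ' _ (N + 1)]
    simpa using (HasDerivAt.fun_sum fun n _ => hasDerivAt_dexpTerm_succ ht).add_const 1
  rw [← mul_sum, ← dexpExt_eq_sum hτ.le hN.le] at hsum
  exact hsum.congr_of_eventuallyEq (dexpExt_eventuallyEq_sum hτ.le (by push_cast; linarith))

theorem hasDerivAt_dexpExt_mul_exp (hτ : 0 < τ) (ht : τ < t) (c : ℝ) :
    HasDerivAt (fun t => dexpExt μ τ t * exp (c * t))
      ((c * dexpExt μ τ t - μ * dexpExt μ τ (t - τ)) * exp (c * t)) t := by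
  have hexp : HasDerivAt (fun t => exp (c * t)) (exp (c * t) * c) t := by
    simpa using ((hasDerivAt_id t).const_mul c).exp
  exact ((hasDerivAt_dexpExt hτ ht).mul hexp).congr_deriv (by ring)

theorem dexpExt_pos (hμ : 0 < μ) (hτ : 0 < τ) (hμτ : μ * τ < (exp 1)⁻¹) (ht : 0 ≤ t) :
    0 < dexpExt μ τ t := by
  set f := fun t => dexpExt μ τ t * exp (τ⁻¹ * t)
  have hκa : μ * exp 1 < τ⁻¹ := by
    calc μ * exp 1 = μ * τ * exp 1 / τ := by field_simp
      _ < (exp 1)⁻¹ * exp 1 / τ := by gcongr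
      _ = τ⁻¹ := by field_simp
  have hinit : MonotoneOn f (Icc 0 τ) := fun x hx y hy hxy => by
    simp only [f, dexpExt_of_le hτ.le hx.2, dexpExt_of_le hτ.le hy.2, one_mul]
    gcongr
  have hderiv : ∀ t, τ < t → HasDerivAt f (τ⁻¹ * f t - μ * exp 1 * f (t - τ)) t := by
    intro t ht
    refine (hasDerivAt_dexpExt_mul_exp hτ ht τ⁻¹).congr_deriv ?_
    simp only [f]
    rw [show τ⁻¹ * t = 1 + τ⁻¹ * (t - τ) by field_simp; ring, exp_add]
    ring
  have hf : Continuous f := by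
    have := continuous_dexpExt (μ := μ) hτ
    fun_prop
  have hmono := monotoneOn_Ici_of_hasDerivAt_delay hτ.le (by positivity) hκa hf
    (by simp [f, dexpExt_of_le hτ.le hτ.le]) hinit hderiv
  have : f 0 ≤ f t := hmono self_mem_Ici ht ht
  simp only [f, dexpExt_of_le hτ.le hτ.le, mul_zero, exp_zero, one_mul] at this
  exact pos_of_mul_pos_left (by linarith) (exp_pos _).le

theorem antitone_dexpExt (hμ : 0 < μ) (hτ : 0 < τ) (hμτ : μ * τ < (exp 1)⁻¹) :
    Antitone (dexpExt μ τ) := by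
  refine AntitoneOn.Iic_union_Ici (a := τ) (fun x hx y hy _ => ?_) ?_
  · rw [dexpExt_of_le hτ.le hx, dexpExt_of_le hτ.le hy]
  refine antitoneOn_of_hasDerivWithinAt_nonpos (convex_Ici τ) (continuous_dexpExt hτ).continuousOn
    (fun t ht => (hasDerivAt_dexpExt hτ ?_).hasDerivWithinAt) (fun t ht => ?_)
  · simpa using ht
  · have := dexpExt_pos hμ hτ hμτ (t := t - τ) (by simp at ht; linarith)
    nlinarith

theorem dexpExt_le_exp (hμ : 0 < μ) (hτ : 0 < τ) (hμτ : μ * τ < (exp 1)⁻¹) (ht : τ ≤ t) :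
    dexpExt μ τ t ≤ exp (-μ * (t - τ)) := by
  set g := fun t => dexpExt μ τ t * exp (μ * t)
  have hg : AntitoneOn g (Ici τ) := by
    have := continuous_dexpExt (μ := μ) hτ
    refine antitoneOn_of_hasDerivWithinAt_nonpos (convex_Ici τ) (by fun_prop)
      (fun t ht => (hasDerivAt_dexpExt_mul_exp hτ (by simpa using ht) μ).hasDerivWithinAt)
      (fun t _ => mul_nonpos_of_nonpos_of_nonneg ?_ (exp_pos _).le)
    have := antitone_dexpExt hμ hτ hμτ (sub_le_self t hτ.le)
    nlinarith
  have hgt : g t ≤ g τ := hg self_mem_Ici ht ht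
  simp only [g, dexpExt_of_le hτ.le le_rfl, one_mul] at hgt
  rwa [← le_div_iff₀ (exp_pos _), ← exp_sub, show μ * τ - μ * t = -μ * (t - τ) by ring] at hgt

theorem dexp_zero_delay (ht : 0 ≤ t) : dexp μ 0 t = exp (-μ * t) := by
  rw [exp_eq_exp_ℝ, NormedSpace.exp_eq_tsum_div]
  refine tsum_congr fun n => ?_
  simp [ht, ← mul_pow, neg_mul]

end

/-- If `0 ≤ μτ < 1/e`, then `dexp(-μt; -μτ) → 0` as `t → ∞`. -/
theorem dexp_tendsto_zero (μ τ : ℝ) (hμ : 0 < μ) (hτ : 0 ≤ τ)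
    (hμτ : μ * τ < (Real.exp 1)⁻¹) :
    Tendsto (fun t => dexp μ τ t) atTop (nhds 0) := by
  have hdecay : Tendsto (fun t => exp (-μ * (t - τ))) atTop (𝓝 0) :=
    tendsto_exp_atBot.comp <| (tendsto_atTop_add_const_right atTop (-τ) tendsto_id)
      |>.const_mul_atTop_of_neg (neg_lt_zero.2 hμ)
  rcases hτ.eq_or_lt with rfl | hτ
  · refine hdecay.congr' ?_
    filter_upwards [eventually_ge_atTop 0] with t ht
    rw [sub_zero, dexp_zero_delay ht]
  · refine tendsto_of_tendsto_of_tendsto_of_le_of_le' tendsto_const_nhds hdecay ?_ ?_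
    · filter_upwards [eventually_ge_atTop 0] with t ht
      exact (dexp_eq_dexpExt ht).symm ▸ (dexpExt_pos hμ hτ hμτ ht).le
    · filter_upwards [eventually_ge_atTop τ] with t ht
      exact (dexp_eq_dexpExt (hτ.le.trans ht)).symm ▸ dexpExt_le_exp hμ hτ hμτ ht
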